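/- The condensation of a clause is unique up to variable renaming: if D₁ and D₂ are both condensations of a clause C, then D₁ and D₂ are variants of each other (each can be obtained from the other by a renaming substitution). -/

import Mathlib

/-- Terms: variables and constants. -/
inductive FOTerm (V C : Type) : Type
  | var : V → FOTerm V C
  | const : C → FOTerm V C
deriving DecidableEq

/-- A function-free atom: a predicate applied to a list of terms. -/
abbrev FOAtom (P V C : Type) := P × List (FOTerm V C)

/-- A literal: a sign (`true` = positive) and an atom. -/
abbrev FOLit (P V C : Type) := Bool × FOAtom P V C

def substT {V C : Type} (σ : V → FOTerm V C) : FOTerm V C → FOTerm V C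
  | .var v => σ v
  | .const c => .const c

def substLit {P V C : Type} (σ : V → FOTerm V C) (l : FOLit P V C) : FOLit P V C :=
  (l.1, l.2.1, l.2.2.map (substT σ))

/-- Clause `Cl` subsumes clause `Dl`: some substitution maps every literal of `Cl`
into `Dl`. -/
def Subsumes {P V C : Type} (Cl Dl : Finset (FOLit P V C)) : Prop :=
  ∃ σ : V → FOTerm V C, ∀ l ∈ Cl, substLit σ l ∈ Dl

/-- `Dl` is a condensation of `Cl`: a subset of `Cl` subsumed by `Cl` that has the
least number of literals among all such subsets. -/
def IsCondensation {P V C : Type} (Dl Cl : Finset (FOLit P V C)) : Prop :=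
  Dl ⊆ Cl ∧ Subsumes Cl Dl ∧
    ∀ Dl' : Finset (FOLit P V C), Dl' ⊆ Cl → Subsumes Cl Dl' → Dl.card ≤ Dl'.card

/-- `Dl₂` is obtained from `Dl₁` by a renaming substitution (an injective map of
variables to variables). -/
def IsRenamingOf {P V C : Type} [DecidableEq P] [DecidableEq V] [DecidableEq C]
    (Dl₁ Dl₂ : Finset (FOLit P V C)) : Prop :=
  ∃ ρ : V → V, Function.Injective ρ ∧
    Dl₁.image (substLit fun v => FOTerm.var (ρ v)) = Dl₂

/-!
Let `σ₁` witness that `Cl` subsumes its condensation `D`, and let `σ` map `Cl` into itself.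
Applying `σ` and then `σ₁` maps `Cl` into `D`; restricted to `D` this map is injective, since
otherwise its image would be a smaller subset of `Cl` subsumed by `Cl`. So it permutes the finite
set `D`, some power of it is the identity on `D`, and `σ` has a substitution as left inverse
on `D`. Such a `σ` must send the variables of `D` injectively to variables, i.e. it acts on `D`
as a renaming. Taking for `σ` the witness that `Cl` subsumes a second condensation `D₂`, the
image of `D` lies in `D₂` and has the same number of literals, hence equals `D₂`.
-/

theorem Set.Finite.exists_iterate_eq_self_of_mapsTo {α : Type*} {f : α → α} {s : Set α}
    (hs : s.Finite) (hmaps : Set.MapsTo f s s) (hinj : Set.InjOn f s) :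
    ∃ k, 0 < k ∧ ∀ x ∈ s, f^[k] x = x := by
  have := hs.to_subtype
  let e : Equiv.Perm s := Equiv.ofBijective _
    (Finite.injective_iff_bijective.mp (hmaps.restrict_inj.mpr hinj))
  refine ⟨orderOf e, orderOf_pos e, fun x hx => ?_⟩
  have he : (e ^ orderOf e) ⟨x, hx⟩ = ⟨x, hx⟩ := by rw [pow_orderOf_eq_one]; rfl
  rw [Equiv.Perm.coe_pow] at he
  simpa [e, hmaps.coe_iterate_restrict] using congrArg Subtype.val he

theorem Set.Finite.exists_injective_eqOn {α : Type*} {f : α → α} {s : Set α}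
    (hs : s.Finite) (hf : Set.InjOn f s) :
    ∃ g : α → α, Function.Injective g ∧ Set.EqOn g f s := by
  let e : s ↪ α := ⟨s.domRestrict f, hf.injective⟩
  obtain ⟨g, hg⟩ : ∃ g : α ≃ α, ∀ x : s, g x = e x := by
    cases finite_or_infinite α
    · exact Cardinal.extend_function_finite e ⟨Equiv.refl α⟩
    · exact Cardinal.extend_function_of_lt e
        (hs.lt_aleph0.trans_le (Cardinal.aleph0_le_mk α)) ⟨Equiv.refl α⟩
  exact ⟨g, g.injective, fun x hx => hg ⟨x, hx⟩⟩

namespace FOTerm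

variable {V C : Type}

def getVarD : FOTerm V C → V → V
  | .var v, _ => v
  | .const _, d => d

theorem var_injective : Function.Injective (FOTerm.var : V → FOTerm V C) :=
  fun _ _ h => FOTerm.var.inj h

end FOTerm

section Substitution

variable {P V C : Type}

def substComp (σ τ : V → FOTerm V C) : V → FOTerm V C := fun v => substT σ (τ v)

theorem substT_var : substT (FOTerm.var : V → FOTerm V C) = id := by
  funext t
  cases t <;> rfl

theorem substT_substT (σ τ : V → FOTerm V C) (t : FOTerm V C) :
    substT σ (substT τ t) = substT (substComp σ τ) t := by
  cases t <;> rfl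

theorem exists_var_of_substT_eq_var {σ : V → FOTerm V C} {t : FOTerm V C} {v : V}
    (h : substT σ t = .var v) : ∃ u, t = .var u := by
  cases t with
  | var u => exact ⟨u, rfl⟩
  | const c => cases h

theorem substLit_var : substLit (P := P) (FOTerm.var : V → FOTerm V C) = id := by
  funext l
  simp [substLit, substT_var]

theorem substLit_substLit (σ τ : V → FOTerm V C) (l : FOLit P V C) :
    substLit σ (substLit τ l) = substLit (substComp σ τ) l := by
  simp [substLit, Function.comp_def, substT_substT]

theorem substLit_congr {σ σ' : V → FOTerm V C} {l : FOLit P V C}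
    (h : ∀ v, FOTerm.var v ∈ l.2.2 → σ v = σ' v) : substLit σ l = substLit σ' l := by
  simp only [substLit, Prod.mk.injEq, List.map_inj_left, true_and]
  rintro (v | c) hv
  exacts [h v hv, rfl]

theorem exists_substLit_eq_iterate (θ : V → FOTerm V C) (n : ℕ) :
    ∃ τ : V → FOTerm V C, substLit τ = (substLit (P := P) θ)^[n] := by
  induction n with
  | zero => exact ⟨FOTerm.var, substLit_var⟩
  | succ n ih =>
    obtain ⟨τ, hτ⟩ := ih
    refine ⟨substComp θ τ, funext fun l => ?_⟩
    rw [Function.iterate_succ_apply', ← hτ, substLit_substLit]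

theorem substT_eq_var_of_substLit_substLit_eq {σ τ : V → FOTerm V C} {l : FOLit P V C}
    (h : substLit τ (substLit σ l) = l) {v : V} (hv : FOTerm.var v ∈ l.2.2) :
    substT τ (σ v) = .var v := by
  rw [substLit_substLit] at h
  have hmap : l.2.2.map (substT (substComp τ σ)) = l.2.2 := congrArg (·.2.2) h
  conv_rhs at hmap => rw [← List.map_id l.2.2]
  exact List.map_inj_left.mp hmap _ hv

end Substitution

def clauseVars {P V C : Type} (D : Finset (FOLit P V C)) : Set V :=
  {v | ∃ l ∈ D, FOTerm.var v ∈ l.2.2}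

theorem clauseVars_finite {P V C : Type} (D : Finset (FOLit P V C)) :
    (clauseVars D).Finite := by
  refine ((D.finite_toSet.biUnion fun l _ => l.2.2.finite_toSet).preimage
    FOTerm.var_injective.injOn).subset ?_
  rintro v ⟨l, hl, hv⟩
  exact Set.mem_biUnion hl hv

theorem exists_renaming_of_leftInvOn {P V C : Type} {D : Finset (FOLit P V C)}
    {σ τ : V → FOTerm V C}
    (h : Set.LeftInvOn (substLit τ) (substLit σ) (D : Set (FOLit P V C))) :
    ∃ ρ : V → V, Function.Injective ρ ∧
      ∀ l ∈ D, substLit σ l = substLit (fun v => .var (ρ v)) l := by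
  have hτσ : ∀ v ∈ clauseVars D, substT τ (σ v) = .var v := by
    rintro v ⟨l, hl, hv⟩
    exact substT_eq_var_of_substLit_substLit_eq (h hl) hv
  have hσ : ∀ v ∈ clauseVars D, σ v = .var ((σ v).getVarD v) := by
    intro v hv
    obtain ⟨u, hu⟩ := exists_var_of_substT_eq_var (hτσ v hv)
    rw [hu]
    rfl
  have hinj : Set.InjOn (fun v => (σ v).getVarD v) (clauseVars D) := by
    intro a ha b hb hab
    apply FOTerm.var_injective (C := C)
    rw [← hτσ a ha, ← hτσ b hb, hσ a ha, hσ b hb]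
    exact congrArg (fun u => substT τ (.var u)) hab
  obtain ⟨ρ, hρ, hρσ⟩ := (clauseVars_finite D).exists_injective_eqOn hinj
  refine ⟨ρ, hρ, fun l hl => substLit_congr fun v hv => ?_⟩
  have hvD : v ∈ clauseVars D := ⟨l, hl, hv⟩
  rw [hσ v hvD, hρσ hvD]

namespace IsCondensation

variable {P V C : Type} {Cl D D₁ D₂ : Finset (FOLit P V C)}

theorem card_eq (h₁ : IsCondensation D₁ Cl) (h₂ : IsCondensation D₂ Cl) :
    D₁.card = D₂.card :=
  le_antisymm (h₁.2.2 D₂ h₂.1 h₂.2.1) (h₂.2.2 D₁ h₁.1 h₁.2.1)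

theorem injOn_of_mapsTo (hD : IsCondensation D Cl) {θ : V → FOTerm V C}
    (hθ : ∀ l ∈ Cl, substLit θ l ∈ D) :
    Set.InjOn (substLit θ) (D : Set (FOLit P V C)) := by
  classical
  have hsub : D.image (substLit θ) ⊆ D :=
    Finset.image_subset_iff.mpr fun l hl => hθ l (hD.1 hl)
  have hsubsumes : Subsumes Cl (D.image (substLit θ)) :=
    ⟨substComp θ θ, fun l hl =>
      substLit_substLit θ θ l ▸ Finset.mem_image_of_mem _ (hθ l hl)⟩
  exact Finset.card_image_iff.mp
    (le_antisymm Finset.card_image_le (hD.2.2 _ (hsub.trans hD.1) hsubsumes))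

theorem exists_leftInvOn (hD : IsCondensation D Cl) {σ : V → FOTerm V C}
    (hσ : ∀ l ∈ Cl, substLit σ l ∈ Cl) :
    ∃ τ : V → FOTerm V C,
      Set.LeftInvOn (substLit τ) (substLit σ) (D : Set (FOLit P V C)) := by
  obtain ⟨σ₁, hσ₁⟩ := hD.2.1
  have hθ : ∀ l ∈ Cl, substLit (substComp σ₁ σ) l ∈ D := fun l hl =>
    substLit_substLit σ₁ σ l ▸ hσ₁ _ (hσ l hl)
  obtain ⟨k, hk, hperiod⟩ := D.finite_toSet.exists_iterate_eq_self_of_mapsTo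
    (fun l hl => hθ l (hD.1 hl)) (hD.injOn_of_mapsTo hθ)
  obtain ⟨τ, hτ⟩ := exists_substLit_eq_iterate (P := P) (substComp σ₁ σ) (k - 1)
  refine ⟨substComp τ σ₁, fun l hl => ?_⟩
  rw [← substLit_substLit, substLit_substLit σ₁ σ, hτ, ← Function.iterate_succ_apply,
    Nat.succ_eq_add_one, Nat.sub_add_cancel hk]
  exact hperiod l hl

theorem isRenamingOf [DecidableEq P] [DecidableEq V] [DecidableEq C]
    (h₁ : IsCondensation D₁ Cl) (h₂ : IsCondensation D₂ Cl) : IsRenamingOf D₁ D₂ := by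
  obtain ⟨σ, hσ⟩ := h₂.2.1
  obtain ⟨τ, hτ⟩ := h₁.exists_leftInvOn fun l hl => h₂.1 (hσ l hl)
  obtain ⟨ρ, hρ, hρσ⟩ := exists_renaming_of_leftInvOn hτ
  refine ⟨ρ, hρ, ?_⟩
  rw [Finset.image_congr fun l hl => (hρσ l hl).symm]
  refine Finset.eq_of_subset_of_card_le
    (Finset.image_subset_iff.mpr fun l hl => hσ l (h₁.1 hl)) ?_
  rw [Finset.card_image_of_injOn hτ.injOn, h₁.card_eq h₂]

end IsCondensation

/-- the condensation of a clause is unique up to variable renaming: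
any two condensations of `Cl` are variants of each other. -/
theorem condensation_unique_up_to_renaming {P V C : Type}
    [DecidableEq P] [DecidableEq V] [DecidableEq C]
    (Cl Dl₁ Dl₂ : Finset (FOLit P V C))
    (h1 : IsCondensation Dl₁ Cl) (h2 : IsCondensation Dl₂ Cl) :
    IsRenamingOf Dl₁ Dl₂ ∧ IsRenamingOf Dl₂ Dl₁ :=
  ⟨h1.isRenamingOf h2, h2.isRenamingOf h1⟩
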